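/- arXiv:math-ph/0302010 — 4 statements merged into one kernel-verified Lean document; each statement's English description precedes it below -/
import Mathlib

section
/- Let φ: ℝ₊ → ℝ be continuous with φ(y) ≥ 0, and suppose z ↦ φ(z²)z is nondecreasing on ℝ₊. Let A, B be n×n symmetric real matrices, and write I(A) = Σ A_{ij}², I(B) = Σ B_{ij}². Then Σ_{i,j} [φ(I(A))A_{ij} - φ(I(B))B_{ij}](A_{ij} - B_{ij}) ≥ [φ(I(A))·I(A)^{1/2} - φ(I(B))·I(B)^{1/2}]·[I(A)^{1/2} - I(B)^{1/2}] ≥ 0. -/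
/-- Second invariant (squared Frobenius norm) of a matrix. -/
def matI {n : ℕ} (A : Matrix (Fin n) (Fin n) ℝ) : ℝ := ∑ i, ∑ j, (A i j) ^ 2

/-- pointwise monotonicity estimate for the map `A ↦ φ(I(A))·A` on
symmetric matrices, given `φ ≥ 0` continuous and `z ↦ φ(z²)z` nondecreasing on `ℝ₊`. -/
theorem pointwise_monotonicity_estimate {n : ℕ} (φ : ℝ → ℝ)
    (hcont : ContinuousOn φ (Set.Ici (0 : ℝ)))
    (hpos : ∀ y ≥ (0 : ℝ), 0 ≤ φ y)
    (hmono : MonotoneOn (fun z => φ (z ^ 2) * z) (Set.Ici (0 : ℝ)))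
    (A B : Matrix (Fin n) (Fin n) ℝ) (hA : A.IsSymm) (hB : B.IsSymm) :
    (φ (matI A) * Real.sqrt (matI A) - φ (matI B) * Real.sqrt (matI B))
        * (Real.sqrt (matI A) - Real.sqrt (matI B))
      ≤ ∑ i, ∑ j, (φ (matI A) * A i j - φ (matI B) * B i j) * (A i j - B i j) ∧
    0 ≤ (φ (matI A) * Real.sqrt (matI A) - φ (matI B) * Real.sqrt (matI B))
        * (Real.sqrt (matI A) - Real.sqrt (matI B)) := by
  have hIA : 0 ≤ matI A :=
    Finset.sum_nonneg fun i _ => Finset.sum_nonneg fun j _ => sq_nonneg _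
  have hIB : 0 ≤ matI B :=
    Finset.sum_nonneg fun i _ => Finset.sum_nonneg fun j _ => sq_nonneg _
  set a := Real.sqrt (matI A) with ha
  set b := Real.sqrt (matI B) with hb
  have ha0 : 0 ≤ a := Real.sqrt_nonneg _
  have hb0 : 0 ≤ b := Real.sqrt_nonneg _
  have ha2 : a ^ 2 = matI A := Real.sq_sqrt hIA
  have hb2 : b ^ 2 = matI B := Real.sq_sqrt hIB
  have hφA : 0 ≤ φ (matI A) := hpos _ hIA
  have hφB : 0 ≤ φ (matI B) := hpos _ hIB
  have hsecond : 0 ≤ (φ (matI A) * a - φ (matI B) * b) * (a - b) := by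
    rw [← ha2, ← hb2]
    rcases le_total a b with h | h
    · have hm := hmono (Set.mem_Ici.mpr ha0) (Set.mem_Ici.mpr hb0) h
      simp only at hm
      nlinarith
    · have hm := hmono (Set.mem_Ici.mpr hb0) (Set.mem_Ici.mpr ha0) h
      simp only at hm
      nlinarith
  refine ⟨?_, hsecond⟩
  -- Cauchy–Schwarz
  have hcs : (∑ p : Fin n × Fin n, A p.1 p.2 * B p.1 p.2) ^ 2
      ≤ (∑ p : Fin n × Fin n, (A p.1 p.2) ^ 2) * (∑ p : Fin n × Fin n, (B p.1 p.2) ^ 2) :=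
    Finset.sum_mul_sq_le_sq_mul_sq Finset.univ _ _
  have hmA : (∑ p : Fin n × Fin n, (A p.1 p.2) ^ 2) = matI A := by
    rw [matI, Fintype.sum_prod_type]
  have hmB : (∑ p : Fin n × Fin n, (B p.1 p.2) ^ 2) = matI B := by
    rw [matI, Fintype.sum_prod_type]
  rw [hmA, hmB] at hcs
  have hS : (∑ p : Fin n × Fin n, A p.1 p.2 * B p.1 p.2) ≤ a * b := by
    have hab : 0 ≤ a * b := mul_nonneg ha0 hb0
    nlinarith [hcs, ha2, hb2]
  have key : ∑ i, ∑ j, (φ (matI A) * A i j - φ (matI B) * B i j) * (A i j - B i j)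
      = φ (matI A) * matI A + φ (matI B) * matI B
        - (φ (matI A) + φ (matI B)) * (∑ p : Fin n × Fin n, A p.1 p.2 * B p.1 p.2) := by
    rw [Fintype.sum_prod_type]
    simp only [matI, Finset.mul_sum, ← Finset.sum_add_distrib, ← Finset.sum_sub_distrib]
    refine Finset.sum_congr rfl fun i _ => ?_
    refine Finset.sum_congr rfl fun j _ => ?_
    ring
  rw [key]
  nlinarith [mul_le_mul_of_nonneg_left hS (by linarith : (0:ℝ) ≤ φ (matI A) + φ (matI B))]
end

section
/- Let φ: ℝ₊ → ℝ be continuous with a₁ ≤ φ(y) ≤ a₂ (a₁ > 0) and satisfying the strong monotonicity [φ(z₁²)z₁ - φ(z₂²)z₂](z₁-z₂) ≥ a₃(z₁-z₂)² for all z₁, z₂ ≥ 0. Let A, B be symmetric n×n matrices with Σ_{i,j}[φ(I(A))A_{ij} - φ(I(B))B_{ij}](A_{ij}-B_{ij}) = 0. Then A = B. -/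
/-- pointwise strict monotonicity (Lemma 3.2, eq. (3.16)): if
`a₁ ≤ φ ≤ a₂` with `a₁ > 0`, `z ↦ φ(z²)z` is `a₃`-strongly monotone, and the
monotonicity pairing of `A ↦ φ(I(A))A` vanishes at symmetric `A, B`, then `A = B`. -/
theorem pointwise_strict_monotonicity {n : ℕ} (a₁ a₂ a₃ : ℝ) (ha₁ : 0 < a₁) (ha₃ : 0 < a₃)
    (φ : ℝ → ℝ) (hcont : ContinuousOn φ (Set.Ici (0 : ℝ)))
    (hbound : ∀ y ≥ (0 : ℝ), a₁ ≤ φ y ∧ φ y ≤ a₂)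
    (hmono : ∀ z₁ ≥ (0 : ℝ), ∀ z₂ ≥ (0 : ℝ),
      a₃ * (z₁ - z₂) ^ 2 ≤ (φ (z₁ ^ 2) * z₁ - φ (z₂ ^ 2) * z₂) * (z₁ - z₂))
    (A B : Matrix (Fin n) (Fin n) ℝ) (hA : A.IsSymm) (hB : B.IsSymm)
    (hzero : ∑ i, ∑ j, (φ (matI A) * A i j - φ (matI B) * B i j) * (A i j - B i j) = 0) :
    A = B := by
  set IA := matI A with hIA
  set IB := matI B with hIB
  have hIA0 : 0 ≤ IA := Finset.sum_nonneg fun i _ =>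
    Finset.sum_nonneg fun j _ => sq_nonneg _
  have hIB0 : 0 ≤ IB := Finset.sum_nonneg fun i _ =>
    Finset.sum_nonneg fun j _ => sq_nonneg _
  set α := Real.sqrt IA with hα
  set β := Real.sqrt IB with hβ
  have hα0 : 0 ≤ α := Real.sqrt_nonneg _
  have hβ0 : 0 ≤ β := Real.sqrt_nonneg _
  have hα2 : α ^ 2 = IA := Real.sq_sqrt hIA0
  have hβ2 : β ^ 2 = IB := Real.sq_sqrt hIB0
  set s := ∑ i, ∑ j, A i j * B i j with hs
  -- Cauchy-Schwarz: s ≤ α * β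
  have hcs : s ≤ α * β := by
    have h1 : s ^ 2 ≤ IA * IB := by
      have key := Finset.sum_mul_sq_le_sq_mul_sq (Finset.univ : Finset (Fin n × Fin n))
        (fun p => A p.1 p.2) (fun p => B p.1 p.2)
      have e1 : (∑ p : Fin n × Fin n, A p.1 p.2 * B p.1 p.2) = s := by
        rw [hs, ← Finset.sum_product']
        rfl
      have e2 : (∑ p : Fin n × Fin n, (A p.1 p.2) ^ 2) = IA := by
        rw [hIA, matI, ← Finset.sum_product']
        rfl
      have e3 : (∑ p : Fin n × Fin n, (B p.1 p.2) ^ 2) = IB := by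
        rw [hIB, matI, ← Finset.sum_product']
        rfl
      rw [e1, e2, e3] at key
      exact key
    calc s ≤ |s| := le_abs_self _
      _ = Real.sqrt (s ^ 2) := (Real.sqrt_sq_eq_abs s).symm
      _ ≤ Real.sqrt (IA * IB) := Real.sqrt_le_sqrt h1
      _ = α * β := by rw [hα, hβ, Real.sqrt_mul hIA0]
  -- expand the zero pairing
  have expand : (∑ i, ∑ j, (φ IA * A i j - φ IB * B i j) * (A i j - B i j))
      = φ IA * IA - (φ IA + φ IB) * s + φ IB * IB := by
    have : ∀ i j : Fin n, (φ IA * A i j - φ IB * B i j) * (A i j - B i j)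
        = φ IA * (A i j) ^ 2 - (φ IA + φ IB) * (A i j * B i j) + φ IB * (B i j) ^ 2 := by
      intro i j; ring
    simp_rw [this, Finset.sum_add_distrib, Finset.sum_sub_distrib, ← Finset.mul_sum]
    rw [hIA, hIB, matI, matI]
  rw [expand] at hzero
  have hφA : a₁ ≤ φ IA := (hbound IA hIA0).1
  have hφB : a₁ ≤ φ IB := (hbound IB hIB0).1
  -- lower bound by strong monotonicity at α, β
  have hlow : a₃ * (α - β) ^ 2 ≤ φ IA * IA - (φ IA + φ IB) * s + φ IB * IB := by
    have h1 := hmono α hα0 β hβ0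
    rw [hα2, hβ2] at h1
    have h2 : (φ IA * α - φ IB * β) * (α - β)
        ≤ φ IA * IA - (φ IA + φ IB) * s + φ IB * IB := by
      have hpos : 0 < φ IA + φ IB := by linarith
      nlinarith [hcs, hα2, hβ2]
    linarith
  rw [hzero] at hlow
  have hαβ : α = β := by
    have h0 : (α - β) ^ 2 ≤ 0 := by
      nlinarith
    have := sq_nonneg (α - β)
    have : (α - β) ^ 2 = 0 := le_antisymm h0 this
    have := pow_eq_zero_iff (n := 2) (by norm_num) |>.mp this
    linarith
  have hIAB : IA = IB := by rw [← hα2, ← hβ2, hαβ]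
  -- now pairing = φ IA * Σ (A-B)^2
  have hsum0 : φ IA * (IA - 2 * s + IB) = 0 := by
    rw [← hzero, hIAB]; ring
  have hdiff : (∑ i, ∑ j, (A i j - B i j) ^ 2) = IA - 2 * s + IB := by
    have he : ∀ i j : Fin n, (A i j - B i j) ^ 2
        = (A i j) ^ 2 - 2 * (A i j * B i j) + (B i j) ^ 2 := by intro i j; ring
    simp_rw [he, Finset.sum_add_distrib, Finset.sum_sub_distrib, ← Finset.mul_sum]
    rw [hIA, hIB, matI, matI]
  have hφpos : 0 < φ IA := lt_of_lt_of_le ha₁ hφA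
  have hzero2 : (∑ i, ∑ j, (A i j - B i j) ^ 2) = 0 := by
    rw [hdiff]
    exact (mul_eq_zero.mp hsum0).resolve_left (ne_of_gt hφpos)
  ext i j
  have h1 : ∀ i ∈ Finset.univ, (∑ j, (A i j - B i j) ^ 2) = 0 := by
    intro i _
    have := Finset.sum_eq_zero_iff_of_nonneg (fun i _ =>
      Finset.sum_nonneg fun j _ => sq_nonneg (A i j - B i j)) |>.mp hzero2
    exact this i (Finset.mem_univ i)
  have h2 := Finset.sum_eq_zero_iff_of_nonneg (fun j _ => sq_nonneg (A i j - B i j))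
    |>.mp (h1 i (Finset.mem_univ i)) j (Finset.mem_univ j)
  have := pow_eq_zero_iff (n := 2) (by norm_num) |>.mp h2
  linarith
end

section
/- Let Ω ⊂ ℝⁿ be bounded, h_m, h ∈ L∞(Ω) with 0 ≤ h_m ≤ a₅, h_m → h a.e., and u_m ⇀ u weakly in X. Then lim inf ∫_Ω h_m·I(u_m)^{1/2} dx ≥ ∫_Ω h·I(u)^{1/2} dx. -/
open MeasureTheory Filter Topology

/-!
A weakly convergent sequence is bounded (Banach–Steinhaus), and `h m → h₀` in `L²` by dominated
convergence, so by Cauchy–Schwarz replacing the weight `h m` by `h₀` changes the functional by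
`o(1)`. For the fixed weight `h₀ ≥ 0`, the convex functional `v ↦ ∫ h₀ ‖v‖` dominates the linear
functional `⟪g, ·⟫` with `g = h₀ u₀ / ‖u₀‖`, with equality at `u₀`; and `⟪g, u m⟫ → ⟪g, u₀⟫`
by weak convergence.
-/

theorem exists_norm_le_of_forall_dual_bounded {𝕜 E ι : Type*} [RCLike 𝕜] [NormedAddCommGroup E]
    [NormedSpace 𝕜 E] {u : ι → E} (h : ∀ f : StrongDual 𝕜 E, ∃ C, ∀ i, ‖f (u i)‖ ≤ C) :
    ∃ C, ∀ i, ‖u i‖ ≤ C := by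
  obtain ⟨C, hC⟩ := banach_steinhaus (g := fun i => NormedSpace.inclusionInDoubleDualLi 𝕜 (u i)) h
  exact ⟨C, fun i => by simpa only [LinearIsometry.norm_map] using hC i⟩

theorem exists_norm_le_of_tendsto_weak {𝕜 E : Type*} [RCLike 𝕜] [NormedAddCommGroup E]
    [NormedSpace 𝕜 E] {u : ℕ → E} {u₀ : E}
    (h : ∀ f : StrongDual 𝕜 E, Tendsto (fun m => f (u m)) atTop (𝓝 (f u₀))) :
    ∃ C, ∀ m, ‖u m‖ ≤ C :=
  exists_norm_le_of_forall_dual_bounded fun f =>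
    let ⟨C, hC⟩ := (h f).norm.bddAbove_range
    ⟨C, Set.forall_mem_range.1 hC⟩

theorem ae_mem_of_tendsto_ae {α β ι : Type*} [MeasurableSpace α] {μ : Measure α}
    [TopologicalSpace β] [Countable ι] {l : Filter ι} [l.NeBot] {f : ι → α → β} {g : α → β}
    {s : Set β} (hs : IsClosed s) (hf : ∀ i, ∀ᵐ x ∂μ, f i x ∈ s)
    (hlim : ∀ᵐ x ∂μ, Tendsto (fun i => f i x) l (𝓝 (g x))) : ∀ᵐ x ∂μ, g x ∈ s := by
  filter_upwards [ae_all_iff.2 hf, hlim] with x hx hxlim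
  exact hs.mem_of_tendsto hxlim (Eventually.of_forall hx)

theorem le_liminf_of_tendsto_of_le_add {ι : Type*} {l : Filter ι} [l.NeBot] {a b ε : ι → ℝ}
    {L : ℝ} (hb : Tendsto b l (𝓝 L)) (hε : Tendsto ε l (𝓝 0)) (hle : ∀ᶠ i in l, b i ≤ a i + ε i)
    (ha : IsBoundedUnder (· ≤ ·) l a) : L ≤ liminf a l := by
  have hlim : Tendsto (fun i => b i - ε i) l (𝓝 L) := by simpa using hb.sub hε
  rw [← hlim.liminf_eq]
  exact liminf_le_liminf (hle.mono fun i hi => by linarith) hlim.isBoundedUnder_ge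
    ha.isCoboundedUnder_flip

section IntegralMulNorm

variable {E Ω : Type*} [NormedAddCommGroup E] [MeasurableSpace Ω] {μ : Measure Ω} {w : Ω → ℝ}

theorem integrable_mul_norm (hw : MemLp w 2 μ) (f : Lp E 2 μ) :
    Integrable (fun x => w x * ‖f x‖) μ :=
  hw.integrable_mul (Lp.memLp f).norm

theorem integral_mul_norm_le_sqrt_mul_norm (hw : MemLp w 2 μ) (f : Lp E 2 μ) :
    ∫ x, w x * ‖f x‖ ∂μ ≤ √(∫ x, w x ^ 2 ∂μ) * ‖f‖ := by
  set W := hw.toLp w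
  have hN : MemLp (fun x => ‖f x‖) 2 μ := (Lp.memLp f).norm
  set N := hN.toLp _
  have inner_eq : inner ℝ W N = ∫ x, w x * ‖f x‖ ∂μ := by
    rw [L2.inner_def]
    refine integral_congr_ae ?_
    filter_upwards [hw.coeFn_toLp, hN.coeFn_toLp] with x hW hN
    simp [W, N, hW, hN, mul_comm]
  have norm_W : ‖W‖ = √(∫ x, w x ^ 2 ∂μ) := by
    rw [← Real.sqrt_sq (norm_nonneg W), ← real_inner_self_eq_norm_sq, L2.inner_def]
    congr 1
    refine integral_congr_ae ?_
    filter_upwards [hw.coeFn_toLp] with x hW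
    simp [W, hW, sq]
  have norm_N : ‖N‖ = ‖f‖ := by
    rw [Lp.norm_toLp, eLpNorm_norm, Lp.norm_def]
  calc ∫ x, w x * ‖f x‖ ∂μ = inner ℝ W N := inner_eq.symm
    _ ≤ ‖W‖ * ‖N‖ := real_inner_le_norm _ _
    _ = √(∫ x, w x ^ 2 ∂μ) * ‖f‖ := by rw [norm_W, norm_N]

theorem integral_mul_norm_le_of_abs_le [IsFiniteMeasure μ] {K : ℝ}
    (hw : AEStronglyMeasurable w μ) (hK : ∀ᵐ x ∂μ, |w x| ≤ K) (f : Lp E 2 μ) :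
    ∫ x, w x * ‖f x‖ ∂μ ≤ √(K ^ 2 * μ.real Set.univ) * ‖f‖ := by
  have hsq : ∫ x, w x ^ 2 ∂μ ≤ K ^ 2 * μ.real Set.univ :=
    (le_abs_self _).trans <| norm_integral_le_of_norm_le_const (C := K ^ 2) <|
      hK.mono fun x hx => by
        rw [Real.norm_eq_abs, abs_pow]
        exact pow_le_pow_left₀ (abs_nonneg _) hx 2
  exact (integral_mul_norm_le_sqrt_mul_norm (.of_bound hw K hK) f).trans <|
    mul_le_mul_of_nonneg_right (Real.sqrt_le_sqrt hsq) (norm_nonneg f)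

variable [InnerProductSpace ℝ E]

theorem norm_smul_inv_norm_le (a : ℝ) (v : E) : ‖(a * ‖v‖⁻¹) • v‖ ≤ |a| := by
  rcases eq_or_ne v 0 with rfl | hv
  · simp
  · rw [norm_smul, Real.norm_eq_abs, abs_mul, abs_inv, abs_norm,
      inv_mul_cancel_right₀ (norm_ne_zero_iff.2 hv)]

theorem inner_smul_inv_norm_self (a : ℝ) (v : E) : inner ℝ ((a * ‖v‖⁻¹) • v) v = a * ‖v‖ := by
  rcases eq_or_ne v 0 with rfl | hv
  · simp
  · rw [real_inner_smul_left, real_inner_self_eq_norm_mul_norm]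
    field_simp

theorem inner_smul_inv_norm_le {a : ℝ} (ha : 0 ≤ a) (v w : E) :
    inner ℝ ((a * ‖v‖⁻¹) • v) w ≤ a * ‖w‖ :=
  (real_inner_le_norm _ _).trans <| mul_le_mul_of_nonneg_right
    ((norm_smul_inv_norm_le a v).trans (abs_of_nonneg ha).le) (norm_nonneg w)

theorem exists_inner_le_integral_mul_norm (hw : MemLp w 2 μ) (hw₀ : 0 ≤ᵐ[μ] w) (v : Lp E 2 μ) :
    ∃ g : Lp E 2 μ, inner ℝ g v = ∫ x, w x * ‖v x‖ ∂μ ∧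
      ∀ f : Lp E 2 μ, inner ℝ g f ≤ ∫ x, w x * ‖f x‖ ∂μ := by
  have hv := Lp.aestronglyMeasurable v
  have hg : MemLp (fun x => (w x * ‖v x‖⁻¹) • v x) 2 μ :=
    hw.mono ((hw.1.mul hv.norm.aemeasurable.inv.aestronglyMeasurable).smul hv)
      (ae_of_all _ fun x => by simpa using norm_smul_inv_norm_le (w x) (v x))
  refine ⟨hg.toLp _, ?_, fun f => ?_⟩
  · rw [L2.inner_def]
    refine integral_congr_ae ?_
    filter_upwards [hg.coeFn_toLp] with x hx
    rw [hx]
    exact inner_smul_inv_norm_self _ _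
  · rw [L2.inner_def]
    refine integral_mono_ae (L2.integrable_inner _ _) (integrable_mul_norm hw f) ?_
    filter_upwards [hg.coeFn_toLp, hw₀] with x hx hx₀
    rw [hx]
    exact inner_smul_inv_norm_le hx₀ _ _

end IntegralMulNorm

theorem tendsto_integral_sub_sq_of_tendsto_ae {Ω : Type*} [MeasurableSpace Ω] {μ : Measure Ω}
    [IsFiniteMeasure μ] {f : ℕ → Ω → ℝ} {g : Ω → ℝ} {K : ℝ}
    (hf : ∀ m, AEStronglyMeasurable (f m) μ) (hK : ∀ m, ∀ᵐ x ∂μ, |f m x| ≤ K)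
    (hlim : ∀ᵐ x ∂μ, Tendsto (fun m => f m x) atTop (𝓝 (g x))) :
    Tendsto (fun m => ∫ x, (g x - f m x) ^ 2 ∂μ) atTop (𝓝 0) := by
  have hg : AEStronglyMeasurable g μ := aestronglyMeasurable_of_tendsto_ae _ hf hlim
  have hgK : ∀ᵐ x ∂μ, g x ∈ Set.Icc (-K) K :=
    ae_mem_of_tendsto_ae isClosed_Icc (fun m => (hK m).mono fun x hx => abs_le.1 hx) hlim
  simpa using tendsto_integral_of_dominated_convergence (F := fun m x => (g x - f m x) ^ 2)
    (f := fun _ => 0) (fun _ => (2 * K) ^ 2)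
    (fun m => (hg.sub (hf m)).pow 2) (integrable_const _)
    (fun m => by
      filter_upwards [hK m, hgK] with x hx hgx
      rw [Real.norm_eq_abs, abs_pow]
      exact pow_le_pow_left₀ (abs_nonneg _)
        (abs_le.2 ⟨by linarith [abs_le.1 hx, hgx.1], by linarith [abs_le.1 hx, hgx.2]⟩) 2)
    (hlim.mono fun x hx => by simpa using (hx.const_sub (g x)).pow 2)

theorem bingham_functional_weak_lsc_general {n : ℕ} {Ω : Type*} [MeasurableSpace Ω]
    (μ : Measure Ω) [IsFiniteMeasure μ]
    (a₅ : ℝ) (h : ℕ → Ω → ℝ) (h₀ : Ω → ℝ)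
    (hmeas : ∀ m, Measurable (h m))
    (hb : ∀ m, ∀ᵐ x ∂μ, 0 ≤ h m x ∧ h m x ≤ a₅)
    (hae : ∀ᵐ x ∂μ, Tendsto (fun m => h m x) atTop (nhds (h₀ x)))
    (u : ℕ → Lp (EuclideanSpace ℝ (Fin n × Fin n)) 2 μ)
    (u₀ : Lp (EuclideanSpace ℝ (Fin n × Fin n)) 2 μ)
    (hweak : ∀ f : Lp (EuclideanSpace ℝ (Fin n × Fin n)) 2 μ →L[ℝ] ℝ,
      Tendsto (fun m => f (u m)) atTop (nhds (f u₀))) :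
    (∫ x, h₀ x * ‖(u₀ : Ω →ₘ[μ] EuclideanSpace ℝ (Fin n × Fin n)) x‖ ∂μ)
      ≤ liminf (fun m =>
          ∫ x, h m x * ‖(u m : Ω →ₘ[μ] EuclideanSpace ℝ (Fin n × Fin n)) x‖ ∂μ) atTop := by
  have hmeas' m : AEStronglyMeasurable (h m) μ := (hmeas m).aestronglyMeasurable
  have habs m : ∀ᵐ x ∂μ, |h m x| ≤ a₅ := (hb m).mono fun _ hx => (abs_of_nonneg hx.1).trans_le hx.2
  have hb₀ : ∀ᵐ x ∂μ, h₀ x ∈ Set.Icc 0 a₅ := ae_mem_of_tendsto_ae isClosed_Icc hb hae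
  have hL2 m : MemLp (h m) 2 μ := .of_bound (hmeas' m) a₅ (habs m)
  have hL2₀ : MemLp h₀ 2 μ := .of_bound (aestronglyMeasurable_of_tendsto_ae _ hmeas' hae) a₅
    (hb₀.mono fun _ hx => (abs_of_nonneg hx.1).trans_le hx.2)
  obtain ⟨C, hC⟩ := exists_norm_le_of_tendsto_weak hweak
  obtain ⟨g, hg_eq, hg_le⟩ := exists_inner_le_integral_mul_norm hL2₀ (hb₀.mono fun _ hx => hx.1) u₀
  have hbdd : IsBoundedUnder (· ≤ ·) atTop fun m => ∫ x, h m x * ‖u m x‖ ∂μ :=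
    ⟨√(a₅ ^ 2 * μ.real Set.univ) * C, eventually_map.2 <| .of_forall fun m =>
      (integral_mul_norm_le_of_abs_le (hmeas' m) (habs m) (u m)).trans
        (mul_le_mul_of_nonneg_left (hC m) (Real.sqrt_nonneg _))⟩
  refine le_liminf_of_tendsto_of_le_add (b := fun m => inner ℝ g (u m))
    (ε := fun m => √(∫ x, (h₀ x - h m x) ^ 2 ∂μ) * C) ?_ ?_ (.of_forall fun m => ?_) hbdd
  · simpa [hg_eq] using hweak (innerSL ℝ g)
  · simpa using ((tendsto_integral_sub_sq_of_tendsto_ae hmeas' habs hae).sqrt).mul_const C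
  · have hCS := integral_mul_norm_le_sqrt_mul_norm (hL2₀.sub (hL2 m)) (u m)
    calc inner ℝ g (u m) ≤ ∫ x, h₀ x * ‖u m x‖ ∂μ := hg_le (u m)
      _ = ∫ x, h m x * ‖u m x‖ ∂μ + ∫ x, (h₀ x - h m x) * ‖u m x‖ ∂μ := by
        simp only [sub_mul]
        rw [integral_sub (integrable_mul_norm hL2₀ _) (integrable_mul_norm (hL2 m) _)]
        ring
      _ ≤ ∫ x, h m x * ‖u m x‖ ∂μ + √(∫ x, (h₀ x - h m x) ^ 2 ∂μ) * C := by
        gcongr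
        exact hCS.trans (mul_le_mul_of_nonneg_left (hC m) (Real.sqrt_nonneg _))

/-- Lemma 3.7: weak lower semicontinuity of the Bingham functional.
The space `X` (H¹-fields with norm `(∫ I(u))^{1/2}`) is represented through the rate of
strain tensors, viewed isometrically as elements of `L²(Ω; ℝ^{n×n})`; weak convergence
`u_m ⇀ u` means convergence under every continuous linear functional, and
`I(u)^{1/2}(x) = ‖u(x)‖` is the pointwise Frobenius (Euclidean) norm. -/
theorem bingham_functional_weak_lsc {n : ℕ} {Ω : Type*} [MeasurableSpace Ω]
    (μ : Measure Ω) [IsFiniteMeasure μ]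
    (a₅ : ℝ) (h : ℕ → Ω → ℝ) (h₀ : Ω → ℝ)
    (hmeas : ∀ m, Measurable (h m)) (hmeas₀ : Measurable h₀)
    (hb : ∀ m, ∀ᵐ x ∂μ, 0 ≤ h m x ∧ h m x ≤ a₅)
    (hae : ∀ᵐ x ∂μ, Tendsto (fun m => h m x) atTop (nhds (h₀ x)))
    (u : ℕ → Lp (EuclideanSpace ℝ (Fin n × Fin n)) 2 μ)
    (u₀ : Lp (EuclideanSpace ℝ (Fin n × Fin n)) 2 μ)
    (hweak : ∀ f : Lp (EuclideanSpace ℝ (Fin n × Fin n)) 2 μ →L[ℝ] ℝ,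
      Tendsto (fun m => f (u m)) atTop (nhds (f u₀))) :
    (∫ x, h₀ x * ‖(u₀ : Ω →ₘ[μ] EuclideanSpace ℝ (Fin n × Fin n)) x‖ ∂μ)
      ≤ liminf (fun m =>
          ∫ x, h m x * ‖(u m : Ω →ₘ[μ] EuclideanSpace ℝ (Fin n × Fin n)) x‖ ∂μ) atTop :=
  bingham_functional_weak_lsc_general μ a₅ h h₀ hmeas hb hae u u₀ hweak
end

section
/- Consider the augmented-Lagrangian iteration errors: in Hilbert spaces X, M, let u_{m+1} ∈ X, q_m ∈ M satisfy energy relations yielding ‖q_{m+1}‖² - ‖q_m‖² + ‖q_{m+1}-q_m‖² + 2ρ_m·D_{m+1} + 2ρ_m r‖Bu_{m+1}‖² = -2ρ_m(Bu_{m+1}, q_{m+1}-q_m), where D_{m+1} ≥ 0, B ∈ L(X,M), r > 0, and 0 < ρ ≤ ρ_m ≤ ρ̄ < 2r. Then ‖q_{m+1}‖² - ‖q_m‖² + 2ρ_m D_{m+1} + ρ_m(2r - ρ_m)‖Bu_{m+1}‖² ≤ 0; consequently {‖q_m‖} is nonincreasing and convergent, Σ D_m < ∞ so D_m → 0, and Bu_m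 → 0 in M. -/
/-!
Completing the square, `‖q_{m+1} - q_m + ρ_m B u_{m+1}‖² ≥ 0`, absorbs the cross term of the
energy identity into `‖q_{m+1} - q_m‖²` at the price of `ρ_m² ‖B u_{m+1}‖²`, which leaves the
positive weight `ρ_m (2r - ρ_m) ≥ ρ (2r - ρ̄)` on `‖B u_{m+1}‖²`. Hence `‖q_m‖²` decreases, and
its decrements, which dominate fixed multiples of `D_{m+1}` and of `‖B u_{m+1}‖²`, telescope to a
finite sum.
-/

open Filter Topology Finset

theorem neg_sq_mul_norm_sq_le_norm_sq_add_two_mul_inner {E : Type*} [SeminormedAddCommGroup E]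
    [InnerProductSpace ℝ E] (b d : E) (t : ℝ) :
    -(t ^ 2 * ‖b‖ ^ 2) ≤ ‖d‖ ^ 2 + 2 * t * inner ℝ b d := by
  have h := norm_add_sq_real d (t • b)
  rw [real_inner_smul_right, real_inner_comm, norm_smul, Real.norm_eq_abs, mul_pow, sq_abs] at h
  nlinarith [sq_nonneg ‖d + t • b‖]

theorem summable_of_add_le_of_nonneg {a c : ℕ → ℝ} (ha : ∀ n, 0 ≤ a n) (hc : ∀ n, 0 ≤ c n)
    (h : ∀ n, a (n + 1) + c n ≤ a n) : Summable c :=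
  summable_of_sum_range_le hc fun n =>
    calc ∑ i ∈ range n, c i ≤ ∑ i ∈ range n, (a i - a (i + 1)) :=
          sum_le_sum fun i _ => by linarith [h i]
      _ = a 0 - a n := sum_range_sub' a n
      _ ≤ a 0 := by linarith [ha n]

theorem tendsto_zero_of_summable_norm_sq {E : Type*} [SeminormedAddGroup E] {f : ℕ → E}
    (h : Summable fun n => ‖f n‖ ^ 2) : Tendsto f atTop (𝓝 0) := by
  rw [tendsto_zero_iff_norm_tendsto_zero]
  simpa using h.tendsto_atTop_zero.sqrt

theorem augmented_lagrangian_convergence_general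
    {X M : Type*} [NormedAddCommGroup X] [InnerProductSpace ℝ X]
    [NormedAddCommGroup M] [InnerProductSpace ℝ M]
    (B : X →L[ℝ] M) (u : ℕ → X) (q : ℕ → M) (D : ℕ → ℝ) (ρ : ℕ → ℝ)
    (r ρlo ρhi : ℝ)
    (hD : ∀ m, 0 ≤ D m)
    (hρlo : 0 < ρlo) (hρhi : ρhi < 2 * r)
    (hρ : ∀ m, ρlo ≤ ρ m ∧ ρ m ≤ ρhi)
    (henergy : ∀ m, ‖q (m + 1)‖ ^ 2 - ‖q m‖ ^ 2 + ‖q (m + 1) - q m‖ ^ 2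
      + 2 * ρ m * D (m + 1) + 2 * ρ m * r * ‖B (u (m + 1))‖ ^ 2
      = -2 * ρ m * (inner ℝ (B (u (m + 1))) (q (m + 1) - q m) : ℝ)) :
    (∀ m, ‖q (m + 1)‖ ^ 2 - ‖q m‖ ^ 2 + 2 * ρ m * D (m + 1)
      + ρ m * (2 * r - ρ m) * ‖B (u (m + 1))‖ ^ 2 ≤ 0) ∧
    Antitone (fun m => ‖q m‖) ∧
    (∃ α : ℝ, Tendsto (fun m => ‖q m‖) atTop (nhds α)) ∧
    Summable D ∧
    Tendsto D atTop (nhds 0) ∧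
    Tendsto (fun m => B (u m)) atTop (nhds 0) := by
  have key m : ‖q (m + 1)‖ ^ 2 - ‖q m‖ ^ 2 + 2 * ρ m * D (m + 1)
      + ρ m * (2 * r - ρ m) * ‖B (u (m + 1))‖ ^ 2 ≤ 0 := by
    linarith [henergy m,
      neg_sq_mul_norm_sq_le_norm_sq_add_two_mul_inner (B (u (m + 1))) (q (m + 1) - q m) (ρ m)]
  have hweight m : ρlo * (2 * r - ρhi) ≤ ρ m * (2 * r - ρ m) := by
    obtain ⟨hlo, hhi⟩ := hρ m
    nlinarith
  have hweight_pos : 0 < ρlo * (2 * r - ρhi) := mul_pos hρlo (by linarith)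
  have hdecD m : ‖q (m + 1)‖ ^ 2 + 2 * ρlo * D (m + 1) ≤ ‖q m‖ ^ 2 := by
    linarith [key m, mul_le_mul_of_nonneg_right (hρ m).1 (hD (m + 1)),
      mul_nonneg (hweight_pos.le.trans (hweight m)) (sq_nonneg ‖B (u (m + 1))‖)]
  have hdecB m : ‖q (m + 1)‖ ^ 2 + ρlo * (2 * r - ρhi) * ‖B (u (m + 1))‖ ^ 2 ≤ ‖q m‖ ^ 2 := by
    linarith [key m, mul_le_mul_of_nonneg_right (hweight m) (sq_nonneg ‖B (u (m + 1))‖),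
      mul_nonneg (hρlo.le.trans (hρ m).1) (hD (m + 1))]
  have hanti : Antitone fun m => ‖q m‖ := antitone_nat_of_succ_le fun m =>
    (pow_le_pow_iff_left₀ (norm_nonneg _) (norm_nonneg _) two_ne_zero).mp <| by
      linarith [hdecD m, mul_nonneg (by positivity : (0 : ℝ) ≤ 2 * ρlo) (hD (m + 1))]
  have hsumD : Summable D := (summable_nat_add_iff 1).mp <|
    (summable_mul_left_iff (by positivity : 2 * ρlo ≠ 0)).mp <|
      summable_of_add_le_of_nonneg (a := fun m => ‖q m‖ ^ 2) (fun _ => sq_nonneg _)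
        (fun m => mul_nonneg (by positivity) (hD (m + 1))) hdecD
  have hsumB : Summable fun m => ‖B (u (m + 1))‖ ^ 2 :=
    (summable_mul_left_iff hweight_pos.ne').mp <|
      summable_of_add_le_of_nonneg (a := fun m => ‖q m‖ ^ 2) (fun _ => sq_nonneg _)
        (fun m => mul_nonneg hweight_pos.le (sq_nonneg _)) hdecB
  exact ⟨key, hanti, ⟨_, tendsto_atTop_ciInf hanti ⟨0, by rintro _ ⟨m, rfl⟩; positivity⟩⟩,
    hsumD, hsumD.tendsto_atTop_zero,
    (tendsto_add_atTop_iff_nat 1).mp (tendsto_zero_of_summable_norm_sq hsumB)⟩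

/-- convergence bookkeeping of the augmented-Lagrangian algorithm
(Theorem 9.4, eqs. (9.30)–(9.35)). -/
theorem augmented_lagrangian_convergence
    {X M : Type*} [NormedAddCommGroup X] [InnerProductSpace ℝ X] [CompleteSpace X]
    [NormedAddCommGroup M] [InnerProductSpace ℝ M] [CompleteSpace M]
    (B : X →L[ℝ] M) (u : ℕ → X) (q : ℕ → M) (D : ℕ → ℝ) (ρ : ℕ → ℝ)
    (r ρlo ρhi : ℝ) (hr : 0 < r)
    (hD : ∀ m, 0 ≤ D m)
    (hρlo : 0 < ρlo) (hρhi : ρhi < 2 * r)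
    (hρ : ∀ m, ρlo ≤ ρ m ∧ ρ m ≤ ρhi)
    (henergy : ∀ m, ‖q (m + 1)‖ ^ 2 - ‖q m‖ ^ 2 + ‖q (m + 1) - q m‖ ^ 2
      + 2 * ρ m * D (m + 1) + 2 * ρ m * r * ‖B (u (m + 1))‖ ^ 2
      = -2 * ρ m * (inner ℝ (B (u (m + 1))) (q (m + 1) - q m) : ℝ)) :
    (∀ m, ‖q (m + 1)‖ ^ 2 - ‖q m‖ ^ 2 + 2 * ρ m * D (m + 1)
      + ρ m * (2 * r - ρ m) * ‖B (u (m + 1))‖ ^ 2 ≤ 0) ∧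
    Antitone (fun m => ‖q m‖) ∧
    (∃ α : ℝ, Tendsto (fun m => ‖q m‖) atTop (nhds α)) ∧
    Summable D ∧
    Tendsto D atTop (nhds 0) ∧
    Tendsto (fun m => B (u m)) atTop (nhds 0) :=
  augmented_lagrangian_convergence_general B u q D ρ r ρlo ρhi hD hρlo hρhi hρ henergy
end
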